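/- arXiv:1411.4696 — 2 statements merged into one kernel-verified Lean document; each statement's English description precedes it below -/
import Mathlib

section
/- Let G and G_T be commutative groups, e : G → G → G_T a bilinear map, g, Q ∈ G, s₁, s₂, h integers, g₁ = g^{s₁}, g₂ = g^{s₂}. If (U, V, W) ∈ G³ satisfies the verification equations e(V, g) = e(Q^h·U, g₁) and e(W, g) = e(Q·U, g₂), then for every integer r' the re-randomized triple (U·g^{r'}, V·g₁^{r'}, W·g₂^{r'}) also satisfies e(V·g₁^{r'}, g) = e(Q^h·U·g^{r'}, g₁) and e(W·g₂^{r'}, g) = e(Q·U·g^{r'}, g₂). (Public re-randomizability of signatures of the IBS scheme of Yuan et al.) -/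
/-!
Rerandomizing multiplies both sides of a verification equation `e(V, g) = e(X, g^s)` by one
and the same factor: `e((g^s)^r, g) = e(g, g)^(s r) = e(g^r, g^s)` by bilinearity.
-/

section Bilinear

variable {G G_T : Type*} [CommGroup G] [CommGroup G_T] (e : G → G → G_T)

theorem map_zpow_left_of_map_mul_left (hl : ∀ x y z : G, e (x * y) z = e x z * e y z)
    (x y : G) (n : ℤ) : e (x ^ n) y = e x y ^ n :=
  map_zpow (MonoidHom.mk' (e · y) fun a b => hl a b y) x n

theorem map_zpow_right_of_map_mul_right (hr : ∀ x y z : G, e x (y * z) = e x y * e x z)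
    (x y : G) (n : ℤ) : e x (y ^ n) = e x y ^ n :=
  map_zpow (MonoidHom.mk' (e x) (hr x)) y n

variable (hl : ∀ x y z : G, e (x * y) z = e x z * e y z)
  (hr : ∀ x y z : G, e x (y * z) = e x y * e x z)
include hl hr

theorem map_zpow_zpow_swap (g : G) (s n : ℤ) : e ((g ^ s) ^ n) g = e (g ^ n) (g ^ s) := by
  rw [← zpow_mul, map_zpow_left_of_map_mul_left e hl, map_zpow_left_of_map_mul_left e hl,
    map_zpow_right_of_map_mul_right e hr, ← zpow_mul, mul_comm]

theorem map_mul_zpow_eq_of_map_eq {g V X : G} {s : ℤ} (hV : e V g = e X (g ^ s)) (n : ℤ) :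
    e (V * (g ^ s) ^ n) g = e (X * g ^ n) (g ^ s) := by
  rw [hl, hV, map_zpow_zpow_swap e hl hr, ← hl]

end Bilinear

/-- Public re-randomizability of signatures of the IBS scheme of Yuan et al.:
if `(U, V, W)` satisfies the verification equations for hash value `h`,
then so does `(U·g^{r'}, V·g₁^{r'}, W·g₂^{r'})` for every integer `r'`. -/
theorem ibs_rerandomizable {G G_T : Type*} [CommGroup G] [CommGroup G_T]
    (e : G → G → G_T)
    (hl : ∀ x y z : G, e (x * y) z = e x z * e y z)
    (hr : ∀ x y z : G, e x (y * z) = e x y * e x z)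
    (g Q : G) (s₁ s₂ h : ℤ)
    (g₁ g₂ : G) (hg₁ : g₁ = g ^ s₁) (hg₂ : g₂ = g ^ s₂)
    (U V W : G)
    (hV : e V g = e (Q ^ h * U) g₁)
    (hW : e W g = e (Q * U) g₂) :
    ∀ r' : ℤ,
      e (V * g₁ ^ r') g = e (Q ^ h * (U * g ^ r')) g₁ ∧
      e (W * g₂ ^ r') g = e (Q * (U * g ^ r')) g₂ := by
  intro r'
  subst hg₁ hg₂
  simp only [← mul_assoc]
  exact ⟨map_mul_zpow_eq_of_map_eq e hl hr hV r', map_mul_zpow_eq_of_map_eq e hl hr hW r'⟩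
end

section
/- Let p be a prime, G and G_T commutative groups with x^p = 1 for all x ∈ G, e : G → G → G_T a bilinear map, g, Q ∈ G, s₁, s₂ integers, g₁ = g^{s₁}, g₂ = g^{s₂}. Suppose (U₁, V₁, W₁) and (U₂, V₂, W₂) are valid signatures for integer hash values h₁ and h₂ with h₁ ≢ h₂ (mod p). Then for every integer h* there exist integers δ₁, δ₂ such that (U₁^{δ₁}·U₂^{δ₂}, V₁^{δ₁}·V₂^{δ₂}, W₁^{δ₁}·W₂^{δ₂}) is a valid signature for h*. In particular, from any two valid signatures under the same identity with distinct hash values one can forge a valid signature for any chosen hash value. (Algebraic core of Lemma 1: universal forgery against the IBS scheme of Yuan et al.) -/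
/-!
Both validity equations say that two homomorphic images `x ↦ e x y` agree, so the combination
with exponents `δ₁, δ₂` of two valid signatures satisfies them with the `Q`-exponents combined:
`h₁ δ₁ + h₂ δ₂` in the first and `δ₁ + δ₂` in the second. Since `Q ^ p = 1` these only matter
mod `p`, and as `h₁ - h₂` is invertible mod `p` one can solve `δ₁ + δ₂ ≡ 1`,
`h₁ δ₁ + h₂ δ₂ ≡ h*`.
-/

theorem exists_affine_combination_modEq {p : ℕ} (hp : p.Prime) {h₁ h₂ : ℤ}
    (hne : ¬ h₁ ≡ h₂ [ZMOD p]) (h : ℤ) :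
    ∃ δ₁ δ₂ : ℤ, h₁ * δ₁ + h₂ * δ₂ ≡ h [ZMOD p] ∧ δ₁ + δ₂ ≡ 1 [ZMOD p] := by
  have : Fact p.Prime := ⟨hp⟩
  have hd : (h₁ - h₂ : ZMod p) ≠ 0 := by
    rwa [sub_ne_zero, Ne, ZMod.intCast_eq_intCast_iff]
  set δ : ZMod p := (h - h₂) / (h₁ - h₂)
  have hδ : (h₁ - h₂ : ZMod p) * δ = h - h₂ := mul_div_cancel₀ _ hd
  refine ⟨δ.cast, (1 - δ).cast, ?_, ?_⟩ <;> rw [← ZMod.intCast_eq_intCast_iff] <;>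
    push_cast [ZMod.intCast_cast, ZMod.cast_id', id]
  · linear_combination hδ
  · ring

theorem zpow_eq_zpow_of_modEq {G : Type*} [Group G] {x : G} {n : ℤ} (hx : x ^ n = 1)
    {a b : ℤ} (hab : a ≡ b [ZMOD n]) : x ^ a = x ^ b := by
  rw [zpow_eq_zpow_emod a hx, hab, ← zpow_eq_zpow_emod b hx]

theorem map_zpow_mul_zpow_eq_of_modEq {G H : Type*} [CommGroup G] [CommGroup H] (f f' : G →* H)
    {n : ℤ} (hexp : ∀ x : G, x ^ n = 1) {Q U₁ U₂ V₁ V₂ : G} {h₁ h₂ h δ₁ δ₂ : ℤ}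
    (hV₁ : f V₁ = f' (Q ^ h₁ * U₁)) (hV₂ : f V₂ = f' (Q ^ h₂ * U₂))
    (hδ : h₁ * δ₁ + h₂ * δ₂ ≡ h [ZMOD n]) :
    f (V₁ ^ δ₁ * V₂ ^ δ₂) = f' (Q ^ h * (U₁ ^ δ₁ * U₂ ^ δ₂)) := by
  have hQ : Q ^ (h₁ * δ₁ + h₂ * δ₂) = Q ^ h := zpow_eq_zpow_of_modEq (hexp Q) hδ
  calc f (V₁ ^ δ₁ * V₂ ^ δ₂) = f' ((Q ^ h₁ * U₁) ^ δ₁ * (Q ^ h₂ * U₂) ^ δ₂) := by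
        simp only [map_mul, map_zpow, hV₁, hV₂]
    _ = f' (Q ^ (h₁ * δ₁ + h₂ * δ₂) * (U₁ ^ δ₁ * U₂ ^ δ₂)) := by
        rw [mul_zpow, mul_zpow, zpow_add, zpow_mul, zpow_mul, mul_mul_mul_comm]
    _ = f' (Q ^ h * (U₁ ^ δ₁ * U₂ ^ δ₂)) := by rw [hQ]

theorem universal_forgery_general (p : ℕ) (hp : p.Prime)
    {G G_T : Type*} [CommGroup G] [CommGroup G_T]
    (hexp : ∀ x : G, x ^ (p : ℤ) = 1)
    (e : G → G → G_T)
    (hl : ∀ x y z : G, e (x * y) z = e x z * e y z)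
    (g Q : G)
    (g₁ g₂ : G)
    (h₁ h₂ : ℤ) (hne : ¬ h₁ ≡ h₂ [ZMOD (p : ℤ)])
    (U₁ V₁ W₁ U₂ V₂ W₂ : G)
    (hV₁ : e V₁ g = e (Q ^ h₁ * U₁) g₁) (hW₁ : e W₁ g = e (Q * U₁) g₂)
    (hV₂ : e V₂ g = e (Q ^ h₂ * U₂) g₁) (hW₂ : e W₂ g = e (Q * U₂) g₂) :
    ∀ hs : ℤ, ∃ δ₁ δ₂ : ℤ,
      e (V₁ ^ δ₁ * V₂ ^ δ₂) g = e (Q ^ hs * (U₁ ^ δ₁ * U₂ ^ δ₂)) g₁ ∧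
      e (W₁ ^ δ₁ * W₂ ^ δ₂) g = e (Q * (U₁ ^ δ₁ * U₂ ^ δ₂)) g₂ := by
  intro hs
  let eLeft (y : G) : G →* G_T := MonoidHom.mk' (e · y) (hl · · y)
  obtain ⟨δ₁, δ₂, hcomb, hsum⟩ := exists_affine_combination_modEq hp hne hs
  refine ⟨δ₁, δ₂, ?_, ?_⟩
  · exact map_zpow_mul_zpow_eq_of_modEq (eLeft g) (eLeft g₁) hexp hV₁ hV₂ hcomb
  · rw [← zpow_one Q] at hW₁ hW₂ ⊢
    exact map_zpow_mul_zpow_eq_of_modEq (eLeft g) (eLeft g₂) hexp hW₁ hW₂ (by simpa using hsum)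

/-- Algebraic core of Lemma 1 (universal forgery against the IBS scheme of
Yuan et al.): from two valid signatures with hash values `h₁ ≢ h₂ (mod p)`
one can forge a valid signature for any hash value `h*`. -/
theorem universal_forgery (p : ℕ) (hp : p.Prime)
    {G G_T : Type*} [CommGroup G] [CommGroup G_T]
    (hexp : ∀ x : G, x ^ (p : ℤ) = 1)
    (e : G → G → G_T)
    (hl : ∀ x y z : G, e (x * y) z = e x z * e y z)
    (hr : ∀ x y z : G, e x (y * z) = e x y * e x z)
    (g Q : G) (s₁ s₂ : ℤ)
    (g₁ g₂ : G) (hg₁ : g₁ = g ^ s₁) (hg₂ : g₂ = g ^ s₂)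
    (h₁ h₂ : ℤ) (hne : ¬ h₁ ≡ h₂ [ZMOD (p : ℤ)])
    (U₁ V₁ W₁ U₂ V₂ W₂ : G)
    (hV₁ : e V₁ g = e (Q ^ h₁ * U₁) g₁) (hW₁ : e W₁ g = e (Q * U₁) g₂)
    (hV₂ : e V₂ g = e (Q ^ h₂ * U₂) g₁) (hW₂ : e W₂ g = e (Q * U₂) g₂) :
    ∀ hs : ℤ, ∃ δ₁ δ₂ : ℤ,
      e (V₁ ^ δ₁ * V₂ ^ δ₂) g = e (Q ^ hs * (U₁ ^ δ₁ * U₂ ^ δ₂)) g₁ ∧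
      e (W₁ ^ δ₁ * W₂ ^ δ₂) g = e (Q * (U₁ ^ δ₁ * U₂ ^ δ₂)) g₂ :=
  universal_forgery_general p hp hexp e hl g Q g₁ g₂ h₁ h₂ hne U₁ V₁ W₁ U₂ V₂ W₂ hV₁ hW₁ hV₂ hW₂
end
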